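/- arXiv:2507.19224 — 9 statements merged into one kernel-verified Lean document; each statement's English description precedes it below -/
import Mathlib

section
/- Let B ⊆ ℝⁿ be nonempty, closed and convex, μ > 0, ζ ∈ (0,1], x ∈ ℝⁿ, yᵏ ∈ B, y_reg = (1/(1+μ))·yᵏ + (μ/(1+μ))·x, and Q(y) = (1/(2μ))‖y − yᵏ‖² + (1/2)‖x − y‖² − (1/2)‖x − yᵏ‖². Let ŷ ∈ B satisfy Q(ŷ) ≤ Q(b) for all b ∈ B, and let y ∈ B satisfy Q(y) ≤ ζ·Q(ŷ). Then ‖y − ŷ‖ ≤ sqrt((2μ/(1+μ))·(Q(y) − Q(ŷ))) ≤ sqrt(−(2μ(1−ζ))/((1+μ)ζ)·Q(y)). -/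
/-!
Completing the square, `Q y = (1 + μ) / (2 μ) * ‖y_reg - y‖ ^ 2 + Q y_reg`, so minimizing `Q` over
`B` is projecting `y_reg` onto `B`. The variational inequality of the projection gives the
quadratic growth `‖y - ŷ‖ ^ 2 + ‖y_reg - ŷ‖ ^ 2 ≤ ‖y_reg - y‖ ^ 2` on `B`, which is the first
inequality; the second is `Q ŷ ≥ Q y / ζ`.
-/

open RealInnerProductSpace

variable {F : Type*} [NormedAddCommGroup F] [InnerProductSpace ℝ F]

theorem mul_norm_sub_sq_add_mul_norm_sub_sq {a b : ℝ} {p q m : F}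
    (hm : (a + b) • m = a • p + b • q) (y : F) :
    a * ‖y - p‖ ^ 2 + b * ‖y - q‖ ^ 2 =
      (a + b) * ‖y - m‖ ^ 2 + a * ‖m - p‖ ^ 2 + b * ‖m - q‖ ^ 2 := by
  have hcross : a • (m - p) + b • (m - q) = 0 := by
    rw [smul_sub, smul_sub, sub_add_sub_comm, ← add_smul, hm, sub_self]
  have hinner : a * ⟪y - m, m - p⟫ + b * ⟪y - m, m - q⟫ = 0 := by
    rw [← inner_smul_right, ← inner_smul_right, ← inner_add_right, hcross, inner_zero_right]
  rw [← sub_add_sub_cancel y m p, ← sub_add_sub_cancel y m q, norm_add_sq_real,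
    norm_add_sq_real]
  linear_combination 2 * hinner

theorem norm_sub_sq_add_norm_sub_sq_le_of_isMinOn {K : Set F} (hK : Convex ℝ K) {u v w : F}
    (hv : v ∈ K) (hmin : IsMinOn (fun w => ‖u - w‖) K v) (hw : w ∈ K) :
    ‖w - v‖ ^ 2 + ‖u - v‖ ^ 2 ≤ ‖u - w‖ ^ 2 := by
  have hinner : ⟪u - v, w - v⟫ ≤ 0 :=
    (norm_eq_iInf_iff_real_inner_le_zero hK hv).1 (hmin.iInf_eq hv).symm w hw
  rw [show u - w = (u - v) - (w - v) by abel, norm_sub_sq_real (u - v) (w - v)]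
  linarith

theorem stmt_2_general {n : ℕ} (B : Set (EuclideanSpace ℝ (Fin n)))
    (hBconv : Convex ℝ B)
    (μ ζ : ℝ) (hμ : 0 < μ) (hζ : ζ ∈ Set.Ioc (0 : ℝ) 1)
    (x : EuclideanSpace ℝ (Fin n)) (yk : EuclideanSpace ℝ (Fin n))
    (yreg : EuclideanSpace ℝ (Fin n))
    (hyreg : yreg = (1 / (1 + μ)) • yk + (μ / (1 + μ)) • x)
    (Q : EuclideanSpace ℝ (Fin n) → ℝ)
    (hQ : ∀ y, Q y =
      (1 / (2 * μ)) * ‖y - yk‖ ^ 2 + (1 / 2) * ‖x - y‖ ^ 2 - (1 / 2) * ‖x - yk‖ ^ 2)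
    (yhat : EuclideanSpace ℝ (Fin n)) (hyhatB : yhat ∈ B)
    (hyhatmin : ∀ b ∈ B, Q yhat ≤ Q b)
    (y : EuclideanSpace ℝ (Fin n)) (hyB : y ∈ B)
    (hy : Q y ≤ ζ * Q yhat) :
    ‖y - yhat‖ ≤ Real.sqrt ((2 * μ / (1 + μ)) * (Q y - Q yhat)) ∧
      Real.sqrt ((2 * μ / (1 + μ)) * (Q y - Q yhat)) ≤
        Real.sqrt (-(2 * μ * (1 - ζ)) / ((1 + μ) * ζ) * Q y) := by
  have hμ1 : 0 < 1 + μ := by linarith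
  have hbary : (1 / (2 * μ) + 1 / 2) • yreg = (1 / (2 * μ)) • yk + (1 / 2 : ℝ) • x := by
    rw [hyreg]
    match_scalars <;> field_simp
  have hQreg : ∀ z, Q z = (1 + μ) / (2 * μ) * ‖yreg - z‖ ^ 2 + Q yreg := by
    intro z
    have h := mul_norm_sub_sq_add_mul_norm_sub_sq hbary
    rw [hQ, hQ, norm_sub_rev x z, norm_sub_rev x yreg, h, h, sub_self, norm_zero,
      norm_sub_rev yreg z]
    field_simp
    ring
  have hproj : IsMinOn (fun w => ‖yreg - w‖) B yhat := fun w hw => by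
    have h := hyhatmin w hw
    rw [hQreg yhat, hQreg w] at h
    exact (sq_le_sq₀ (norm_nonneg _) (norm_nonneg _)).1
      (le_of_mul_le_mul_left (by linarith) (by positivity : 0 < (1 + μ) / (2 * μ)))
  have hgrowth := norm_sub_sq_add_norm_sub_sq_le_of_isMinOn hBconv hyhatB hproj hyB
  have hdist : ‖y - yhat‖ ^ 2 ≤ 2 * μ / (1 + μ) * (Q y - Q yhat) := by
    rw [hQreg y, hQreg yhat, add_sub_add_right_eq_sub, ← mul_sub, ← mul_assoc,
      div_mul_div_cancel₀ hμ1.ne', div_self (by positivity), one_mul]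
    linarith
  have hgap : 2 * μ / (1 + μ) * (Q y - Q yhat) ≤
      -(2 * μ * (1 - ζ)) / ((1 + μ) * ζ) * Q y := by
    have hζ0 := hζ.1
    have h : Q y - Q yhat ≤ -(1 - ζ) / ζ * Q y := by
      rw [div_mul_eq_mul_div, le_div_iff₀ hζ0]
      linarith
    calc 2 * μ / (1 + μ) * (Q y - Q yhat) ≤ 2 * μ / (1 + μ) * (-(1 - ζ) / ζ * Q y) :=
          mul_le_mul_of_nonneg_left h (by positivity)
      _ = -(2 * μ * (1 - ζ)) / ((1 + μ) * ζ) * Q y := by field_simp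
  exact ⟨Real.le_sqrt_of_sq_le hdist, Real.sqrt_le_sqrt hgap⟩

theorem stmt_2 {n : ℕ} (B : Set (EuclideanSpace ℝ (Fin n)))
    (hBne : B.Nonempty) (hBclosed : IsClosed B) (hBconv : Convex ℝ B)
    (μ ζ : ℝ) (hμ : 0 < μ) (hζ : ζ ∈ Set.Ioc (0 : ℝ) 1)
    (x : EuclideanSpace ℝ (Fin n)) (yk : EuclideanSpace ℝ (Fin n)) (hyk : yk ∈ B)
    (yreg : EuclideanSpace ℝ (Fin n))
    (hyreg : yreg = (1 / (1 + μ)) • yk + (μ / (1 + μ)) • x)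
    (Q : EuclideanSpace ℝ (Fin n) → ℝ)
    (hQ : ∀ y, Q y =
      (1 / (2 * μ)) * ‖y - yk‖ ^ 2 + (1 / 2) * ‖x - y‖ ^ 2 - (1 / 2) * ‖x - yk‖ ^ 2)
    (yhat : EuclideanSpace ℝ (Fin n)) (hyhatB : yhat ∈ B)
    (hyhatmin : ∀ b ∈ B, Q yhat ≤ Q b)
    (y : EuclideanSpace ℝ (Fin n)) (hyB : y ∈ B)
    (hy : Q y ≤ ζ * Q yhat) :
    ‖y - yhat‖ ≤ Real.sqrt ((2 * μ / (1 + μ)) * (Q y - Q yhat)) ∧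
      Real.sqrt ((2 * μ / (1 + μ)) * (Q y - Q yhat)) ≤
        Real.sqrt (-(2 * μ * (1 - ζ)) / ((1 + μ) * ζ) * Q y) :=
  stmt_2_general B hBconv μ ζ hμ hζ x yk yreg hyreg Q hQ yhat hyhatB hyhatmin y hyB hy
end

section
/- Let A, B ⊆ ℝⁿ be nonempty closed sets, 0 < λ ≤ λ₊, 0 < μ ≤ μ₊, ζ ∈ (0,1], xᵏ ∈ A and yᵏ ∈ B. Suppose x' ∈ A satisfies (1/2)‖x' − yᵏ‖² + (1/(2λ))‖x' − xᵏ‖² ≤ (1/2)‖x − yᵏ‖² + (1/(2λ))‖x − xᵏ‖² for all x ∈ A. Define Q(y) = (1/(2μ))‖y − yᵏ‖² + (1/2)‖x' − y‖² − (1/2)‖x' − yᵏ‖², let ŷ ∈ B satisfy Q(ŷ) ≤ Q(b) for all b ∈ B, and let y' ∈ B satisfy Q(y') ≤ ζ·Q(ŷ). Then, with a = min{1/(2μ₊), 1/(2λ₊), ζ/(ζ+1)} and d² = ‖x' − xᵏ‖² + ‖y' − yᵏ‖² − Q(y'), one has (1/2)‖x' − y'‖² + a·d² ≤ (1/2)‖xᵏ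 − yᵏ‖². -/
theorem stmt_5 {n : ℕ} (A B : Set (EuclideanSpace ℝ (Fin n)))
    (hAne : A.Nonempty) (hAclosed : IsClosed A)
    (hBne : B.Nonempty) (hBclosed : IsClosed B)
    (lam lamp mu mup ζ : ℝ)
    (hlam : 0 < lam) (hlamp : lam ≤ lamp) (hmu : 0 < mu) (hmup : mu ≤ mup)
    (hζ : ζ ∈ Set.Ioc (0 : ℝ) 1)
    (xk : EuclideanSpace ℝ (Fin n)) (hxk : xk ∈ A)
    (yk : EuclideanSpace ℝ (Fin n)) (hyk : yk ∈ B)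
    (x' : EuclideanSpace ℝ (Fin n)) (hx'A : x' ∈ A)
    (hx'min : ∀ x ∈ A,
      (1 / 2) * ‖x' - yk‖ ^ 2 + (1 / (2 * lam)) * ‖x' - xk‖ ^ 2 ≤
        (1 / 2) * ‖x - yk‖ ^ 2 + (1 / (2 * lam)) * ‖x - xk‖ ^ 2)
    (Q : EuclideanSpace ℝ (Fin n) → ℝ)
    (hQ : ∀ y, Q y =
      (1 / (2 * mu)) * ‖y - yk‖ ^ 2 + (1 / 2) * ‖x' - y‖ ^ 2 - (1 / 2) * ‖x' - yk‖ ^ 2)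
    (yhat : EuclideanSpace ℝ (Fin n)) (hyhatB : yhat ∈ B)
    (hyhatmin : ∀ b ∈ B, Q yhat ≤ Q b)
    (y' : EuclideanSpace ℝ (Fin n)) (hy'B : y' ∈ B)
    (hy' : Q y' ≤ ζ * Q yhat) :
    (1 / 2) * ‖x' - y'‖ ^ 2 +
        min (1 / (2 * mup)) (min (1 / (2 * lamp)) (ζ / (ζ + 1))) *
          (‖x' - xk‖ ^ 2 + ‖y' - yk‖ ^ 2 - Q y') ≤
      (1 / 2) * ‖xk - yk‖ ^ 2 := by
  obtain ⟨hζ0, hζ1⟩ := hζ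
  set a := min (1 / (2 * mup)) (min (1 / (2 * lamp)) (ζ / (ζ + 1))) with ha
  have hmup0 : 0 < mup := lt_of_lt_of_le hmu hmup
  have hlamp0 : 0 < lamp := lt_of_lt_of_le hlam hlamp
  have hQyk : Q yk = 0 := by
    have := hQ yk
    simp at this
    linarith [this]
  have hQy'0 : Q y' ≤ 0 := by
    have h1 : Q yhat ≤ 0 := by have := hyhatmin yk hyk; linarith
    have h2 : ζ * Q yhat ≤ 0 := mul_nonpos_of_nonneg_of_nonpos hζ0.le h1
    linarith
  have hamu : a ≤ 1 / (2 * mu) := by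
    refine le_trans (min_le_left _ _) ?_
    gcongr
  have halam : a ≤ 1 / (2 * lam) := by
    refine le_trans (le_trans (min_le_right _ _) (min_le_left _ _)) ?_
    gcongr
  have ha1 : a ≤ 1 / 2 := by
    refine le_trans (le_trans (min_le_right _ _) (min_le_right _ _)) ?_
    rw [div_le_div_iff₀ (by linarith) (by norm_num)]
    linarith
  have h1 := hx'min xk hxk
  simp only [sub_self, norm_zero] at h1
  have hQy' := hQ y'
  have hn1 : (0:ℝ) ≤ ‖x' - xk‖ ^ 2 := sq_nonneg _
  have hn2 : (0:ℝ) ≤ ‖y' - yk‖ ^ 2 := sq_nonneg _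
  nlinarith [mul_le_mul_of_nonneg_right hamu hn2, mul_le_mul_of_nonneg_right halam hn1,
    mul_le_mul_of_nonpos_right ha1 hQy'0]
end

section
/- Let A, B ⊆ ℝⁿ be nonempty closed sets, λ > 0, μ > 0, ζ ∈ (0,1], xᵏ ∈ A and yᵏ ∈ B. Suppose x' ∈ A satisfies (1/2)‖x' − yᵏ‖² + (1/(2λ))‖x' − xᵏ‖² ≤ (1/2)‖x − yᵏ‖² + (1/(2λ))‖x − xᵏ‖² for all x ∈ A. Define Q(y) = (1/(2μ))‖y − yᵏ‖² + (1/2)‖x' − y‖² − (1/2)‖x' − yᵏ‖², let ŷ ∈ B satisfy Q(ŷ) ≤ Q(b) for all b ∈ B, and let y' ∈ B satisfy Q(y') ≤ ζ·Q(ŷ). Set γ = −((1−ζ)/ζ)·Q(ŷ) and ρ² = (1/μ)‖ŷ − yᵏ‖² − 2((1−ζ)/ζ)·Q(y') (which is nonnegative). Then (1/2)‖x' − y'‖² ≤ (1/2)‖x' − ŷ‖² + (1/2)ρ² ≤ (1/2)‖xᵏ − yᵏ‖² + γ. -/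
/-! With `c = (1 - ζ)/ζ ≥ 0`, the `y`-subproblem satisfies `Q ŷ ≤ Q y' ≤ ζ Q ŷ ≤ Q yᵏ = 0`, and
`Q y' ≤ ζ Q ŷ` is equivalent to `Q y' + c Q y' ≤ Q ŷ`. Unfolding `Q` turns this into the first
inequality, and `Q ŷ + c Q ŷ ≤ c Q y'` together with `‖x' - yᵏ‖ ≤ ‖xᵏ - yᵏ‖` (compare `x'` with the
competitor `xᵏ` in the proximal `x`-step) gives the second. -/

lemma sq_norm_sub_le_of_forall_prox_le {E : Type*} [SeminormedAddCommGroup E] {A : Set E}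
    {lam : ℝ} (hlam : 0 ≤ lam) {xk yk x' : E} (hxk : xk ∈ A)
    (hx' : ∀ x ∈ A,
      (1 / 2) * ‖x' - yk‖ ^ 2 + (1 / (2 * lam)) * ‖x' - xk‖ ^ 2 ≤
        (1 / 2) * ‖x - yk‖ ^ 2 + (1 / (2 * lam)) * ‖x - xk‖ ^ 2) :
    ‖x' - yk‖ ^ 2 ≤ ‖xk - yk‖ ^ 2 := by
  have h := hx' xk hxk
  have hprox : 0 ≤ (1 / (2 * lam)) * ‖x' - xk‖ ^ 2 := by positivity
  rw [sub_self, norm_zero] at h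
  linarith

lemma add_one_sub_div_mul_le {ζ a b : ℝ} (hζ : 0 < ζ) (h : a ≤ ζ * b) :
    a + (1 - ζ) / ζ * a ≤ b := by
  have hsum : a + (1 - ζ) / ζ * a = a / ζ := by field_simp; ring
  rw [hsum, div_le_iff₀ hζ]
  linarith

theorem stmt_6_general {n : ℕ} (A B : Set (EuclideanSpace ℝ (Fin n)))
    (lam mu ζ : ℝ) (hlam : 0 < lam) (hmu : 0 < mu) (hζ : ζ ∈ Set.Ioc (0 : ℝ) 1)
    (xk : EuclideanSpace ℝ (Fin n)) (hxk : xk ∈ A)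
    (yk : EuclideanSpace ℝ (Fin n)) (hyk : yk ∈ B)
    (x' : EuclideanSpace ℝ (Fin n))
    (hx'min : ∀ x ∈ A,
      (1 / 2) * ‖x' - yk‖ ^ 2 + (1 / (2 * lam)) * ‖x' - xk‖ ^ 2 ≤
        (1 / 2) * ‖x - yk‖ ^ 2 + (1 / (2 * lam)) * ‖x - xk‖ ^ 2)
    (Q : EuclideanSpace ℝ (Fin n) → ℝ)
    (hQ : ∀ y, Q y =
      (1 / (2 * mu)) * ‖y - yk‖ ^ 2 + (1 / 2) * ‖x' - y‖ ^ 2 - (1 / 2) * ‖x' - yk‖ ^ 2)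
    (yhat : EuclideanSpace ℝ (Fin n))
    (hyhatmin : ∀ b ∈ B, Q yhat ≤ Q b)
    (y' : EuclideanSpace ℝ (Fin n)) (hy'B : y' ∈ B)
    (hy' : Q y' ≤ ζ * Q yhat)
    (γ rhosq : ℝ)
    (hγ : γ = -((1 - ζ) / ζ) * Q yhat)
    (hrhosq : rhosq = (1 / mu) * ‖yhat - yk‖ ^ 2 - 2 * ((1 - ζ) / ζ) * Q y') :
    0 ≤ rhosq ∧
      (1 / 2) * ‖x' - y'‖ ^ 2 ≤ (1 / 2) * ‖x' - yhat‖ ^ 2 + (1 / 2) * rhosq ∧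
        (1 / 2) * ‖x' - yhat‖ ^ 2 + (1 / 2) * rhosq ≤ (1 / 2) * ‖xk - yk‖ ^ 2 + γ := by
  obtain ⟨hζ0, hζ1⟩ := hζ
  have hc : 0 ≤ (1 - ζ) / ζ := div_nonneg (by linarith) hζ0.le
  have hQyhat_nonpos : Q yhat ≤ 0 := by simpa [hQ yk] using hyhatmin yk hyk
  have hQyhat_le : Q yhat ≤ Q y' := hyhatmin y' hy'B
  have hQy'_nonpos : Q y' ≤ 0 := hy'.trans (mul_nonpos_of_nonneg_of_nonpos hζ0.le hQyhat_nonpos)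
  have hQy'_le : Q y' + (1 - ζ) / ζ * Q y' ≤ Q yhat := add_one_sub_div_mul_le hζ0 hy'
  have hc_mul_le : (1 - ζ) / ζ * Q yhat ≤ (1 - ζ) / ζ * Q y' :=
    mul_le_mul_of_nonneg_left hQyhat_le hc
  have hdist := sq_norm_sub_le_of_forall_prox_le hlam.le hxk hx'min
  have hhalf : (1 / (2 * mu)) * ‖yhat - yk‖ ^ 2 = (1 / 2) * ((1 / mu) * ‖yhat - yk‖ ^ 2) := by
    ring
  refine ⟨?_, ?_, ?_⟩
  · have hcQ : (1 - ζ) / ζ * Q y' ≤ 0 := mul_nonpos_of_nonneg_of_nonpos hc hQy'_nonpos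
    have hnorm : 0 ≤ (1 / mu) * ‖yhat - yk‖ ^ 2 := by positivity
    linarith
  · have hnorm : 0 ≤ (1 / (2 * mu)) * ‖y' - yk‖ ^ 2 := by positivity
    rw [hrhosq]
    linarith [hQ y', hQ yhat]
  · rw [hrhosq, hγ]
    linarith [hQ yhat]

theorem stmt_6 {n : ℕ} (A B : Set (EuclideanSpace ℝ (Fin n)))
    (hAne : A.Nonempty) (hAclosed : IsClosed A)
    (hBne : B.Nonempty) (hBclosed : IsClosed B)
    (lam mu ζ : ℝ) (hlam : 0 < lam) (hmu : 0 < mu) (hζ : ζ ∈ Set.Ioc (0 : ℝ) 1)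
    (xk : EuclideanSpace ℝ (Fin n)) (hxk : xk ∈ A)
    (yk : EuclideanSpace ℝ (Fin n)) (hyk : yk ∈ B)
    (x' : EuclideanSpace ℝ (Fin n)) (hx'A : x' ∈ A)
    (hx'min : ∀ x ∈ A,
      (1 / 2) * ‖x' - yk‖ ^ 2 + (1 / (2 * lam)) * ‖x' - xk‖ ^ 2 ≤
        (1 / 2) * ‖x - yk‖ ^ 2 + (1 / (2 * lam)) * ‖x - xk‖ ^ 2)
    (Q : EuclideanSpace ℝ (Fin n) → ℝ)
    (hQ : ∀ y, Q y =
      (1 / (2 * mu)) * ‖y - yk‖ ^ 2 + (1 / 2) * ‖x' - y‖ ^ 2 - (1 / 2) * ‖x' - yk‖ ^ 2)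
    (yhat : EuclideanSpace ℝ (Fin n)) (hyhatB : yhat ∈ B)
    (hyhatmin : ∀ b ∈ B, Q yhat ≤ Q b)
    (y' : EuclideanSpace ℝ (Fin n)) (hy'B : y' ∈ B)
    (hy' : Q y' ≤ ζ * Q yhat)
    (γ rhosq : ℝ)
    (hγ : γ = -((1 - ζ) / ζ) * Q yhat)
    (hrhosq : rhosq = (1 / mu) * ‖yhat - yk‖ ^ 2 - 2 * ((1 - ζ) / ζ) * Q y') :
    0 ≤ rhosq ∧
      (1 / 2) * ‖x' - y'‖ ^ 2 ≤ (1 / 2) * ‖x' - yhat‖ ^ 2 + (1 / 2) * rhosq ∧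
        (1 / 2) * ‖x' - yhat‖ ^ 2 + (1 / 2) * rhosq ≤ (1 / 2) * ‖xk - yk‖ ^ 2 + γ :=
  stmt_6_general A B lam mu ζ hlam hmu hζ xk hxk yk hyk x' hx'min Q hQ yhat hyhatmin y' hy'B hy' γ
    rhosq hγ hrhosq
end

section
/- Let A, B ⊆ ℝⁿ be nonempty closed sets, 0 < λ₋ ≤ λₖ ≤ λ₊ and 0 < μ₋ ≤ μₖ ≤ μ₊ for all k, and ζ ∈ (0,1]. Let the sequences (xᵏ) ⊆ A, (yᵏ) ⊆ B satisfy, for every k: (a) (1/2)‖x^{k+1} − yᵏ‖² + (1/(2λₖ))‖x^{k+1} − xᵏ‖² ≤ (1/2)‖x − yᵏ‖² + (1/(2λₖ))‖x − xᵏ‖² for all x ∈ A; (b) with Q^{k+1}(y) = (1/(2μₖ))‖y − yᵏ‖² + (1/2)‖x^{k+1} − y‖² − (1/2)‖x^{k+1} − yᵏ‖², the point ŷ^{k+1} ∈ B satisfies Q^{k+1}(ŷ^{k+1}) ≤ Q^{k+1}(b) for all b ∈ B; (c) y^{k+1} ∈ B satisfies Q^{k+1}(y^{k+1}) ≤ ζ·Q^{k+1}(ŷ^{k+1})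 and ‖y^{k+1} − ŷ^{k+1}‖ ≤ sqrt(−((1−ζ)/ζ)·Q^{k+1}(y^{k+1})). Then: the series ∑ₖ (‖x^{k+1} − xᵏ‖² + ‖y^{k+1} − yᵏ‖² − Q^{k+1}(y^{k+1})) converges; γₖ := −((1−ζ)/ζ)·Q^{k+1}(ŷ^{k+1}) → 0; ‖ŷ^{k+1} − y^{k+1}‖ → 0; and ρₖ := sqrt((1/μ_{k-1})‖ŷᵏ − y^{k-1}‖² − 2((1−ζ)/ζ)·Qᵏ(yᵏ)) → 0. -/
/-!
Taking `z = xᵏ` in (a) and adding the definition of `Qᵏ⁺¹(yᵏ⁺¹)` bounds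
`(1/(2λₖ))‖xᵏ⁺¹ - xᵏ‖² + (1/(2μₖ))‖yᵏ⁺¹ - yᵏ‖² - Qᵏ⁺¹(yᵏ⁺¹)` by the decrease of `½‖xᵏ - yᵏ‖²`.
All three terms are nonnegative because `Qᵏ⁺¹(yᵏ⁺¹) ≤ ζ Qᵏ⁺¹(ŷᵏ⁺¹) ≤ ζ Qᵏ⁺¹(yᵏ) = 0`, so the
series is dominated by a telescoping one. Hence `Qᵏ⁺¹(yᵏ⁺¹) → 0` and `yᵏ⁺¹ - yᵏ → 0`, and the
inexactness conditions (c) pass this on to `γₖ`, `ŷᵏ⁺¹ - yᵏ⁺¹` and `ρₖ`.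
-/

open Filter Topology

section ProxGap

variable {E : Type*} [SeminormedAddCommGroup E]

/-- `proxGap (mu k) (x (k + 1)) (y k)` is the paper's `Qᵏ⁺¹`. -/
noncomputable def proxGap (mu : ℝ) (x' y v : E) : ℝ :=
  (1 / (2 * mu)) * ‖v - y‖ ^ 2 + (1 / 2) * ‖x' - v‖ ^ 2 - (1 / 2) * ‖x' - y‖ ^ 2

@[simp]
lemma proxGap_self (mu : ℝ) (x' y : E) : proxGap mu x' y y = 0 := by
  simp [proxGap]

lemma proxGap_descent {x x' y y' : E} {lam mu : ℝ}
    (hx : (1 / 2) * ‖x' - y‖ ^ 2 + (1 / (2 * lam)) * ‖x' - x‖ ^ 2 ≤ (1 / 2) * ‖x - y‖ ^ 2) :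
    (1 / (2 * lam)) * ‖x' - x‖ ^ 2 + (1 / (2 * mu)) * ‖y' - y‖ ^ 2 - proxGap mu x' y y' ≤
      (1 / 2) * ‖x - y‖ ^ 2 - (1 / 2) * ‖x' - y'‖ ^ 2 := by
  unfold proxGap
  linarith

end ProxGap

lemma add_add_le_const_mul_weighted_add {a b q lam mu L M : ℝ} (hlam : 0 < lam) (hL : lam ≤ L)
    (hmu : 0 < mu) (hM : mu ≤ M) (ha : 0 ≤ a) (hb : 0 ≤ b) (hq : 0 ≤ q) :
    a + b + q ≤ (2 * L + 2 * M + 1) * ((1 / (2 * lam)) * a + (1 / (2 * mu)) * b + q) := by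
  have hwa : 0 ≤ (1 / (2 * lam)) * a := by positivity
  have hwb : 0 ≤ (1 / (2 * mu)) * b := by positivity
  calc a + b + q = 2 * lam * ((1 / (2 * lam)) * a) + 2 * mu * ((1 / (2 * mu)) * b) + q := by
        field_simp
    _ ≤ _ := by nlinarith

lemma summable_of_le_sub_succ {s d : ℕ → ℝ} (hs : ∀ k, 0 ≤ s k) (hd : ∀ k, 0 ≤ d k)
    (h : ∀ k, s k ≤ d k - d (k + 1)) : Summable s :=
  summable_of_sum_range_le hs fun m =>
    calc ∑ i ∈ Finset.range m, s i ≤ ∑ i ∈ Finset.range m, (d i - d (i + 1)) :=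
          Finset.sum_le_sum fun i _ => h i
      _ = d 0 - d m := Finset.sum_range_sub' d m
      _ ≤ d 0 := sub_le_self _ (hd m)

lemma summable_sq_norm_sub_add_sq_norm_sub_sub_proxGap {E : Type*} [SeminormedAddCommGroup E]
    {x y : ℕ → E} {lam mu : ℕ → ℝ} {L M : ℝ}
    (hlam : ∀ k, 0 < lam k ∧ lam k ≤ L) (hmu : ∀ k, 0 < mu k ∧ mu k ≤ M)
    (hx : ∀ k, (1 / 2) * ‖x (k + 1) - y k‖ ^ 2 + (1 / (2 * lam k)) * ‖x (k + 1) - x k‖ ^ 2 ≤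
      (1 / 2) * ‖x k - y k‖ ^ 2)
    (hQ : ∀ k, proxGap (mu k) (x (k + 1)) (y k) (y (k + 1)) ≤ 0) :
    Summable fun k => ‖x (k + 1) - x k‖ ^ 2 + ‖y (k + 1) - y k‖ ^ 2
      - proxGap (mu k) (x (k + 1)) (y k) (y (k + 1)) := by
  set C := 2 * L + 2 * M + 1
  have hC : 0 ≤ C := by linarith [(hlam 0).1.trans_le (hlam 0).2, (hmu 0).1.trans_le (hmu 0).2]
  refine summable_of_le_sub_succ (d := fun k => C * ((1 / 2) * ‖x k - y k‖ ^ 2))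
    (fun k => by linarith [hQ k, sq_nonneg ‖x (k + 1) - x k‖, sq_nonneg ‖y (k + 1) - y k‖])
    (fun k => by positivity) fun k => ?_
  rw [← mul_sub, sub_eq_add_neg _ (proxGap _ _ _ _)]
  refine (add_add_le_const_mul_weighted_add (hlam k).1 (hlam k).2 (hmu k).1 (hmu k).2
    (sq_nonneg _) (sq_nonneg _) (neg_nonneg.2 (hQ k))).trans ?_
  rw [← sub_eq_add_neg]
  exact mul_le_mul_of_nonneg_left (proxGap_descent (hx k)) hC

lemma tendsto_neg_mul_of_le_mul {α ζ : ℝ} {q q' : ℕ → ℝ} (hα : 0 ≤ α) (hζ : 0 < ζ)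
    (hq : ∀ k, q k ≤ 0) (h : ∀ k, q' k ≤ ζ * q k) (hq' : Tendsto (fun k => -q' k) atTop (𝓝 0)) :
    Tendsto (fun k => -α * q k) atTop (𝓝 0) := by
  refine squeeze_zero (g := fun k => α / ζ * -q' k) (fun k => by nlinarith [hq k]) (fun k => ?_)
    (by simpa using hq'.const_mul (α / ζ))
  have hqk : -q k ≤ -q' k / ζ := by
    rw [le_div_iff₀ hζ]
    linarith [h k]
  calc -α * q k = α * -q k := by ring
    _ ≤ α * (-q' k / ζ) := mul_le_mul_of_nonneg_left hqk hα
    _ = α / ζ * -q' k := by ring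

lemma tendsto_sqrt_one_div_mul_sq_sub {m α : ℝ} {mu t q : ℕ → ℝ} (hm : 0 < m)
    (hmu : ∀ k, m ≤ mu k) (hα : 0 ≤ α) (hq : ∀ k, q k ≤ 0) (ht : Tendsto t atTop (𝓝 0))
    (hq' : Tendsto (fun k => -q k) atTop (𝓝 0)) :
    Tendsto (fun k => √((1 / mu k) * t k ^ 2 - 2 * α * q k)) atTop (𝓝 0) := by
  have h : Tendsto (fun k => (1 / mu k) * t k ^ 2 - 2 * α * q k) atTop (𝓝 0) := by
    refine squeeze_zero (g := fun k => 1 / m * t k ^ 2 + 2 * α * -q k) (fun k => ?_) (fun k => ?_)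
      (by simpa using ((ht.pow 2).const_mul (1 / m)).add (hq'.const_mul (2 * α)))
    · have := hm.trans_le (hmu k)
      have : 0 ≤ 1 / mu k * t k ^ 2 := by positivity
      nlinarith [hq k]
    · have := mul_le_mul_of_nonneg_right (one_div_le_one_div_of_le hm (hmu k)) (sq_nonneg (t k))
      linarith
  simpa using h.sqrt

theorem stmt_7_general {n : ℕ} (A B : Set (EuclideanSpace ℝ (Fin n)))
    (lamm lamp mum mup ζ : ℝ) (hlamm : 0 < lamm) (hmum : 0 < mum)
    (hζ : ζ ∈ Set.Ioc (0 : ℝ) 1)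
    (lam mu : ℕ → ℝ)
    (hlam : ∀ k, lamm ≤ lam k ∧ lam k ≤ lamp)
    (hmu : ∀ k, mum ≤ mu k ∧ mu k ≤ mup)
    (x y yhat : ℕ → EuclideanSpace ℝ (Fin n))
    (hxA : ∀ k, x k ∈ A) (hyB : ∀ k, y k ∈ B)
    -- (a) exact regularized projection onto A
    (hxmin : ∀ k, ∀ z ∈ A,
      (1 / 2) * ‖x (k + 1) - y k‖ ^ 2 + (1 / (2 * lam k)) * ‖x (k + 1) - x k‖ ^ 2 ≤
        (1 / 2) * ‖z - y k‖ ^ 2 + (1 / (2 * lam k)) * ‖z - x k‖ ^ 2)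
    -- Q k is the function Q^{k+1}
    (Q : ℕ → EuclideanSpace ℝ (Fin n) → ℝ)
    (hQ : ∀ k v, Q k v =
      (1 / (2 * mu k)) * ‖v - y k‖ ^ 2 + (1 / 2) * ‖x (k + 1) - v‖ ^ 2
        - (1 / 2) * ‖x (k + 1) - y k‖ ^ 2)
    -- (b) yhat (k+1) is an exact minimizer of Q^{k+1} over B
    (hyhatmin : ∀ k, ∀ b ∈ B, Q k (yhat (k + 1)) ≤ Q k b)
    -- (c) inexactness conditions
    (hinex1 : ∀ k, Q k (y (k + 1)) ≤ ζ * Q k (yhat (k + 1)))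
    (hinex2 : ∀ k, ‖y (k + 1) - yhat (k + 1)‖ ≤
      Real.sqrt (-((1 - ζ) / ζ) * Q k (y (k + 1)))) :
    Summable (fun k : ℕ =>
        ‖x (k + 1) - x k‖ ^ 2 + ‖y (k + 1) - y k‖ ^ 2 - Q k (y (k + 1))) ∧
      Tendsto (fun k : ℕ => -((1 - ζ) / ζ) * Q k (yhat (k + 1))) atTop (𝓝 0) ∧
        Tendsto (fun k : ℕ => ‖yhat (k + 1) - y (k + 1)‖) atTop (𝓝 0) ∧
          Tendsto (fun k : ℕ =>
              Real.sqrt ((1 / mu k) * ‖yhat (k + 1) - y k‖ ^ 2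
                - 2 * ((1 - ζ) / ζ) * Q k (y (k + 1)))) atTop (𝓝 0) := by
  obtain ⟨hζ0, hζ1⟩ := hζ
  obtain rfl : Q = fun k v => proxGap (mu k) (x (k + 1)) (y k) v := funext₂ hQ
  clear hQ
  beta_reduce at hyhatmin hinex1 hinex2 ⊢
  have hα : 0 ≤ (1 - ζ) / ζ := div_nonneg (sub_nonneg.2 hζ1) hζ0.le
  have hQhat : ∀ k, proxGap (mu k) (x (k + 1)) (y k) (yhat (k + 1)) ≤ 0 := fun k => by
    simpa using hyhatmin k (y k) (hyB k)
  have hQy : ∀ k, proxGap (mu k) (x (k + 1)) (y k) (y (k + 1)) ≤ 0 := fun k =>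
    (hinex1 k).trans (mul_nonpos_of_nonneg_of_nonpos hζ0.le (hQhat k))
  have hsum := summable_sq_norm_sub_add_sq_norm_sub_sub_proxGap
    (fun k => ⟨hlamm.trans_le (hlam k).1, (hlam k).2⟩)
    (fun k => ⟨hmum.trans_le (hmu k).1, (hmu k).2⟩)
    (fun k => by simpa using hxmin k (x k) (hxA k)) hQy
  have hs0 := hsum.tendsto_atTop_zero
  have hQ0 : Tendsto (fun k => -proxGap (mu k) (x (k + 1)) (y k) (y (k + 1))) atTop (𝓝 0) :=
    squeeze_zero (fun k => neg_nonneg.2 (hQy k))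
      (fun k => by linarith [sq_nonneg ‖x (k + 1) - x k‖, sq_nonneg ‖y (k + 1) - y k‖]) hs0
  have hΔy : Tendsto (fun k => ‖y (k + 1) - y k‖) atTop (𝓝 0) := by
    refine squeeze_zero (fun k => norm_nonneg _) (fun k => ?_) (by simpa using hs0.sqrt)
    simpa using Real.abs_le_sqrt (x := ‖y (k + 1) - y k‖)
      (by linarith [sq_nonneg ‖x (k + 1) - x k‖, hQy k])
  have hhat : Tendsto (fun k => ‖yhat (k + 1) - y (k + 1)‖) atTop (𝓝 0) :=
    squeeze_zero (fun k => norm_nonneg _) (fun k => (norm_sub_rev _ _).trans_le (hinex2 k))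
      (by simpa using (hQ0.const_mul ((1 - ζ) / ζ)).sqrt)
  refine ⟨hsum, tendsto_neg_mul_of_le_mul hα hζ0 hQhat hinex1 hQ0, hhat,
    tendsto_sqrt_one_div_mul_sq_sub hmum (fun k => (hmu k).1) hα hQy ?_ hQ0⟩
  exact squeeze_zero (fun k => norm_nonneg _)
    (fun k => norm_sub_le_norm_sub_add_norm_sub _ (y (k + 1)) _) (by simpa using hhat.add hΔy)

theorem stmt_7 {n : ℕ} (A B : Set (EuclideanSpace ℝ (Fin n)))
    (hAne : A.Nonempty) (hAclosed : IsClosed A)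
    (hBne : B.Nonempty) (hBclosed : IsClosed B)
    (lamm lamp mum mup ζ : ℝ) (hlamm : 0 < lamm) (hmum : 0 < mum)
    (hζ : ζ ∈ Set.Ioc (0 : ℝ) 1)
    (lam mu : ℕ → ℝ)
    (hlam : ∀ k, lamm ≤ lam k ∧ lam k ≤ lamp)
    (hmu : ∀ k, mum ≤ mu k ∧ mu k ≤ mup)
    (x y yhat : ℕ → EuclideanSpace ℝ (Fin n))
    (hxA : ∀ k, x k ∈ A) (hyB : ∀ k, y k ∈ B) (hyhatB : ∀ k, yhat (k + 1) ∈ B)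
    -- (a) exact regularized projection onto A
    (hxmin : ∀ k, ∀ z ∈ A,
      (1 / 2) * ‖x (k + 1) - y k‖ ^ 2 + (1 / (2 * lam k)) * ‖x (k + 1) - x k‖ ^ 2 ≤
        (1 / 2) * ‖z - y k‖ ^ 2 + (1 / (2 * lam k)) * ‖z - x k‖ ^ 2)
    -- Q k is the function Q^{k+1}
    (Q : ℕ → EuclideanSpace ℝ (Fin n) → ℝ)
    (hQ : ∀ k v, Q k v =
      (1 / (2 * mu k)) * ‖v - y k‖ ^ 2 + (1 / 2) * ‖x (k + 1) - v‖ ^ 2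
        - (1 / 2) * ‖x (k + 1) - y k‖ ^ 2)
    -- (b) yhat (k+1) is an exact minimizer of Q^{k+1} over B
    (hyhatmin : ∀ k, ∀ b ∈ B, Q k (yhat (k + 1)) ≤ Q k b)
    -- (c) inexactness conditions
    (hinex1 : ∀ k, Q k (y (k + 1)) ≤ ζ * Q k (yhat (k + 1)))
    (hinex2 : ∀ k, ‖y (k + 1) - yhat (k + 1)‖ ≤
      Real.sqrt (-((1 - ζ) / ζ) * Q k (y (k + 1)))) :
    Summable (fun k : ℕ =>
        ‖x (k + 1) - x k‖ ^ 2 + ‖y (k + 1) - y k‖ ^ 2 - Q k (y (k + 1))) ∧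
      Tendsto (fun k : ℕ => -((1 - ζ) / ζ) * Q k (yhat (k + 1))) atTop (𝓝 0) ∧
        Tendsto (fun k : ℕ => ‖yhat (k + 1) - y (k + 1)‖) atTop (𝓝 0) ∧
          Tendsto (fun k : ℕ =>
              Real.sqrt ((1 / mu k) * ‖yhat (k + 1) - y k‖ ^ 2
                - 2 * ((1 - ζ) / ζ) * Q k (y (k + 1)))) atTop (𝓝 0) :=
  stmt_7_general A B lamm lamp mum mup ζ hlamm hmum hζ lam mu hlam hmu x y yhat hxA hyB hxmin Q hQ
    hyhatmin hinex1 hinex2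
end

section
/- Let B = [0,1] ∪ [2,3] ⊆ ℝ, yᵏ = 3, x = 3/2, μ = 10, ζ = 1/2, and Q(y) = (1/(2μ))(y − yᵏ)² + (1/2)(x − y)² − (1/2)(x − yᵏ)². Then: (a) ŷ = 2 is the unique minimizer of Q over B; (b) the point y = 1 ∈ B satisfies Q(1) ≤ (1/2)·Q(2) but |1 − 2| > sqrt(−((1−ζ)/ζ)·Q(1)). In particular, for a nonconvex set B, the condition Q(y) ≤ ζ·Q(ŷ) does not imply the bound ‖y − ŷ‖ ≤ sqrt(−((1−ζ)/ζ)·Q(y)). -/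
theorem stmt_8 (B : Set ℝ) (hB : B = Set.Icc (0 : ℝ) 1 ∪ Set.Icc (2 : ℝ) 3)
    (Q : ℝ → ℝ)
    (hQ : ∀ y, Q y = (1 / (2 * 10)) * (y - 3) ^ 2 + (1 / 2) * ((3 / 2 : ℝ) - y) ^ 2
      - (1 / 2) * ((3 / 2 : ℝ) - 3) ^ 2) :
    ((2 : ℝ) ∈ B ∧ (∀ b ∈ B, Q 2 ≤ Q b) ∧ ∀ b ∈ B, Q b = Q 2 → b = 2) ∧
      ((1 : ℝ) ∈ B ∧ Q 1 ≤ (1 / 2) * Q 2 ∧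
        |(1 : ℝ) - 2| > Real.sqrt (-((1 - (1 / 2 : ℝ)) / (1 / 2 : ℝ)) * Q 1)) := by
  subst hB
  have hQ2 : Q 2 = -19/20 := by rw [hQ]; norm_num
  have hQ1 : Q 1 = -4/5 := by rw [hQ]; norm_num
  refine ⟨⟨?_, ?_, ?_⟩, ?_, ?_, ?_⟩
  · right; constructor <;> norm_num
  · rintro b (⟨hb0, hb1⟩ | ⟨hb2, hb3⟩) <;> rw [hQ2, hQ b] <;> nlinarith
  · rintro b (⟨hb0, hb1⟩ | ⟨hb2, hb3⟩) heq <;> rw [hQ b, hQ2] at heq <;> nlinarith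
  · left; constructor <;> norm_num
  · rw [hQ1, hQ2]; norm_num
  · rw [hQ1]
    have : Real.sqrt (-((1 - (1 / 2 : ℝ)) / (1 / 2 : ℝ)) * (-4/5)) < 1 := by
      rw [show -((1 - (1 / 2 : ℝ)) / (1 / 2 : ℝ)) * (-4/5) = 4/5 by norm_num]
      rw [show (1:ℝ) = Real.sqrt 1 by simp]
      exact Real.sqrt_lt_sqrt (by norm_num) (by norm_num)
    rw [show |(1 : ℝ) - 2| = 1 by norm_num]
    exact this
end

section
/- Let E be a real inner product space, let Ŷ, W, Y₂, G₂ ∈ E, and let b₁, b₂ > 0 satisfy 1 − 1/(2b₁) − 1/(2b₂) > 0. Assume ‖Ŷ − (Ŷ + b₁Y₂)‖ ≤ ‖W − (Ŷ + b₁Y₂)‖ and ‖W − (W + b₂G₂)‖ ≤ ‖Ŷ − (W + b₂G₂)‖. Then (1 − 1/(2b₁) − 1/(2b₂))·‖Ŷ − W‖ ≤ ‖(Ŷ + Y₂) − (W + G₂)‖. -/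
/-!
Put `d = Ŷ - W`. Squaring the two distance comparisons and expanding turns them into the
one-sided bounds `⟪d, Y₂⟫ ≥ -‖d‖² / (2 b₁)` and `⟪d, G₂⟫ ≤ ‖d‖² / (2 b₂)`, so
`⟪d, d + Y₂ - G₂⟫ ≥ (1 - 1/(2b₁) - 1/(2b₂)) ‖d‖²`; Cauchy–Schwarz then divides out one `‖d‖`.
-/

open scoped RealInnerProductSpace

section

variable {E : Type*} [NormedAddCommGroup E] [InnerProductSpace ℝ E]

theorem neg_norm_sq_le_two_mul_inner_of_norm_le_norm_add {x y : E} (h : ‖y‖ ≤ ‖x + y‖) :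
    -‖x‖ ^ 2 ≤ 2 * ⟪x, y⟫ := by
  have hsq := pow_le_pow_left₀ (norm_nonneg y) h 2
  rw [norm_add_sq_real] at hsq
  linarith

theorem neg_norm_sq_div_le_inner_of_norm_smul_le_norm_add_smul {x y : E} {b : ℝ} (hb : 0 < b)
    (h : ‖b • y‖ ≤ ‖x + b • y‖) : -‖x‖ ^ 2 / (2 * b) ≤ ⟪x, y⟫ := by
  have := neg_norm_sq_le_two_mul_inner_of_norm_le_norm_add h
  rw [inner_smul_right] at this
  rw [div_le_iff₀ (by positivity)]
  linarith

theorem mul_norm_le_norm_of_mul_norm_sq_le_inner {x z : E} {c : ℝ} (h : c * ‖x‖ ^ 2 ≤ ⟪x, z⟫) :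
    c * ‖x‖ ≤ ‖z‖ := by
  rcases eq_or_ne x 0 with rfl | hx
  · simp
  have hpos : 0 < ‖x‖ := norm_pos_iff.mpr hx
  refine le_of_mul_le_mul_right ?_ hpos
  calc c * ‖x‖ * ‖x‖ = c * ‖x‖ ^ 2 := by ring
    _ ≤ ⟪x, z⟫ := h
    _ ≤ ‖x‖ * ‖z‖ := real_inner_le_norm x z
    _ = ‖z‖ * ‖x‖ := mul_comm _ _

end

theorem stmt_12_general {E : Type*} [NormedAddCommGroup E] [InnerProductSpace ℝ E]
    (Yhat W Y₂ G₂ : E) (b₁ b₂ : ℝ) (hb₁ : 0 < b₁) (hb₂ : 0 < b₂)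
    (h1 : ‖Yhat - (Yhat + b₁ • Y₂)‖ ≤ ‖W - (Yhat + b₁ • Y₂)‖)
    (h2 : ‖W - (W + b₂ • G₂)‖ ≤ ‖Yhat - (W + b₂ • G₂)‖) :
    (1 - 1 / (2 * b₁) - 1 / (2 * b₂)) * ‖Yhat - W‖ ≤ ‖(Yhat + Y₂) - (W + G₂)‖ := by
  set d := Yhat - W
  have hY : -‖d‖ ^ 2 / (2 * b₁) ≤ ⟪d, Y₂⟫ := by
    refine neg_norm_sq_div_le_inner_of_norm_smul_le_norm_add_smul hb₁ ?_
    convert h1 using 1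
    · rw [sub_add_cancel_left, norm_neg]
    · rw [← norm_neg]; congr 1; simp only [d]; abel
  have hG : -‖d‖ ^ 2 / (2 * b₂) ≤ ⟪d, -G₂⟫ := by
    refine neg_norm_sq_div_le_inner_of_norm_smul_le_norm_add_smul hb₂ ?_
    convert h2 using 1
    · rw [sub_add_cancel_left, norm_neg, smul_neg, norm_neg]
    · congr 1; simp only [d, smul_neg]; abel
  apply mul_norm_le_norm_of_mul_norm_sq_le_inner
  have hsum : (Yhat + Y₂) - (W + G₂) = d + Y₂ + -G₂ := by simp only [d]; abel
  rw [hsum, inner_add_right, inner_add_right, real_inner_self_eq_norm_sq]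
  have hexp : (1 - 1 / (2 * b₁) - 1 / (2 * b₂)) * ‖d‖ ^ 2
      = ‖d‖ ^ 2 + -‖d‖ ^ 2 / (2 * b₁) + -‖d‖ ^ 2 / (2 * b₂) := by
    field_simp
    ring
  linarith

theorem stmt_12 {E : Type*} [NormedAddCommGroup E] [InnerProductSpace ℝ E]
    (Yhat W Y₂ G₂ : E) (b₁ b₂ : ℝ) (hb₁ : 0 < b₁) (hb₂ : 0 < b₂)
    (hb : 0 < 1 - 1 / (2 * b₁) - 1 / (2 * b₂))
    (h1 : ‖Yhat - (Yhat + b₁ • Y₂)‖ ≤ ‖W - (Yhat + b₁ • Y₂)‖)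
    (h2 : ‖W - (W + b₂ • G₂)‖ ≤ ‖Yhat - (W + b₂ • G₂)‖) :
    (1 - 1 / (2 * b₁) - 1 / (2 * b₂)) * ‖Yhat - W‖ ≤ ‖(Yhat + Y₂) - (W + G₂)‖ :=
  stmt_12_general Yhat W Y₂ G₂ b₁ b₂ hb₁ hb₂ h1 h2
end

section
/- Let Y be a real n₁×n₂ matrix and ℓ ≥ 1. Let p₁, …, p_{ℓ+1} ∈ ℝ^{n₁} be orthonormal vectors, q₁, …, q_ℓ ∈ ℝ^{n₂} be orthonormal vectors, and let real scalars α₁, …, α_ℓ and β₂, …, β_{ℓ+1} satisfy the Lanczos recurrence Y·q_j = α_j·p_j + β_{j+1}·p_{j+1} for j = 1, …, ℓ. For 0 ≤ m ≤ ℓ define G_m = ∑_{j=1}^{m} (α_j·p_j + β_{j+1}·p_{j+1})·q_jᵀ. Then ‖Y − G_{ℓ−1}‖_F² = ‖Y − G_ℓ‖_F² + α_ℓ² + β_{ℓ+1}². -/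
/-- The squared Frobenius norm of a real matrix. -/
def frobSq {n₁ n₂ : ℕ} (A : Matrix (Fin n₁) (Fin n₂) ℝ) : ℝ :=
  ∑ i, ∑ j, A i j ^ 2

/-- Statement 14, with `ℓ = L + 1` (so that `ℓ ≥ 1`).  Here `p j` for
`j : Fin (L + 2)` are the left Lanczos vectors `p₁, …, p_{ℓ+1}`, `q j` the right
Lanczos vectors `q₁, …, q_ℓ`, `α j` is `α_{j+1}` and `β j` is `β_{j+2}`
(0-indexed). -/
theorem stmt_14 {n₁ n₂ : ℕ} (L : ℕ) (Y : Matrix (Fin n₁) (Fin n₂) ℝ)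
    (p : Fin (L + 2) → Fin n₁ → ℝ) (q : Fin (L + 1) → Fin n₂ → ℝ)
    (hp : ∀ i j, (∑ t, p i t * p j t) = if i = j then 1 else 0)
    (hq : ∀ i j, (∑ t, q i t * q j t) = if i = j then 1 else 0)
    (α β : Fin (L + 1) → ℝ)
    (hrec : ∀ j : Fin (L + 1),
      Y.mulVec (q j) = α j • p j.castSucc + β j • p j.succ)
    (G : ℕ → Matrix (Fin n₁) (Fin n₂) ℝ)
    (hG : ∀ m, G m = ∑ j ∈ Finset.univ.filter (fun j : Fin (L + 1) => (j : ℕ) < m),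
      Matrix.vecMulVec (α j • p j.castSucc + β j • p j.succ) (q j)) :
    frobSq (Y - G L) = frobSq (Y - G (L + 1)) + (α (Fin.last L)) ^ 2
      + (β (Fin.last L)) ^ 2 := by
  set l : Fin (L + 1) := Fin.last L with hl
  set v : Fin n₁ → ℝ := α l • p l.castSucc + β l • p l.succ with hv
  have hfilter : Finset.univ.filter (fun j : Fin (L + 1) => (j : ℕ) < L + 1)
      = Finset.univ := by
    apply Finset.filter_true_of_mem
    intro j _
    exact j.isLt
  have hmem : l ∉ Finset.univ.filter (fun j : Fin (L + 1) => (j : ℕ) < L) := by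
    simp [hl]
  have huniv : (Finset.univ : Finset (Fin (L + 1)))
      = insert l (Finset.univ.filter (fun j : Fin (L + 1) => (j : ℕ) < L)) := by
    ext j
    simp only [Finset.mem_univ, Finset.mem_insert, Finset.mem_filter, true_and, true_iff]
    rcases eq_or_ne j l with h | h
    · exact Or.inl h
    · right
      have : (j : ℕ) ≠ L := fun hc => h (Fin.ext (by simp [hl, hc]))
      omega
  have hGstep : G (L + 1) = Matrix.vecMulVec v (q l) + G L := by
    rw [hG, hG, hfilter]
    conv_lhs => rw [huniv]
    rw [Finset.sum_insert hmem]
  -- orthogonality of (Y - G (L+1)) rows with q l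
  have hA : ∀ i, ∑ j, (Y - G (L + 1)) i j * q l j = 0 := by
    intro i
    have hY : ∑ j, Y i j * q l j = v i := by
      have := congrFun (hrec l) i
      simpa [Matrix.mulVec, dotProduct, hv] using this
    have hGq : ∑ j, (G (L + 1)) i j * q l j = v i := by
      rw [hG, hfilter]
      have : ∀ j₂, (∑ k : Fin (L + 1),
          Matrix.vecMulVec (α k • p k.castSucc + β k • p k.succ) (q k)) i j₂
          = ∑ k : Fin (L + 1), (α k • p k.castSucc + β k • p k.succ) i * q k j₂ := by
        intro j₂
        simp [Matrix.sum_apply, Matrix.vecMulVec_apply]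
      simp only [this]
      simp only [Finset.sum_mul]
      rw [Finset.sum_comm]
      have : ∀ k : Fin (L + 1),
          ∑ j₂, (α k • p k.castSucc + β k • p k.succ) i * q k j₂ * q l j₂
          = (α k • p k.castSucc + β k • p k.succ) i * (if k = l then 1 else 0) := by
        intro k
        rw [← hq k l, Finset.mul_sum]
        congr 1; ext j₂; ring
      calc ∑ k : Fin (L + 1), ∑ j₂, (α k • p k.castSucc + β k • p k.succ) i * q k j₂ * q l j₂
          = ∑ k : Fin (L + 1), (α k • p k.castSucc + β k • p k.succ) i
              * (if k = l then 1 else 0) := by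
            exact Finset.sum_congr rfl fun k _ => this k
        _ = v i := by simp [hv]
    simp only [Matrix.sub_apply, sub_mul, Finset.sum_sub_distrib, hY, hGq, sub_self]
  -- norm of v
  have hvnorm : ∑ i, v i ^ 2 = α l ^ 2 + β l ^ 2 := by
    have hne : (l.castSucc : Fin (L + 2)) ≠ l.succ := by
      intro h
      have := congrArg Fin.val h
      simp [Fin.val_succ] at this
    have h1 := hp l.castSucc l.castSucc
    have h2 := hp l.succ l.succ
    have h3 := hp l.castSucc l.succ
    simp only [if_pos rfl, if_neg hne] at h1 h2 h3
    have : ∑ i, v i ^ 2 = α l ^ 2 * (∑ t, p l.castSucc t * p l.castSucc t)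
        + 2 * (α l * β l) * (∑ t, p l.castSucc t * p l.succ t)
        + β l ^ 2 * (∑ t, p l.succ t * p l.succ t) := by
      simp only [hv, Pi.add_apply, Pi.smul_apply, smul_eq_mul, Finset.mul_sum,
        ← Finset.sum_add_distrib]
      congr 1; ext i; ring
    rw [this, h1, h2, h3]; simp only [if_true]; ring
  have hqnorm : ∑ j, q l j ^ 2 = 1 := by
    have := hq l l
    simpa [pow_two] using this
  -- main computation
  have hsplit : Y - G L = (Y - G (L + 1)) + Matrix.vecMulVec v (q l) := by
    rw [hGstep]; abel
  rw [hsplit]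
  unfold frobSq
  have expand : ∀ i j, ((Y - G (L + 1)) + Matrix.vecMulVec v (q l)) i j ^ 2
      = (Y - G (L + 1)) i j ^ 2 + 2 * ((Y - G (L + 1)) i j * q l j) * v i
        + v i ^ 2 * q l j ^ 2 := by
    intro i j
    simp only [Matrix.add_apply, Matrix.vecMulVec_apply]
    ring
  simp only [expand, Finset.sum_add_distrib]
  have h2 : ∑ i, ∑ j, 2 * ((Y - G (L + 1)) i j * q l j) * v i = 0 := by
    apply Finset.sum_eq_zero
    intro i _
    calc ∑ j, 2 * ((Y - G (L + 1)) i j * q l j) * v i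
        = 2 * v i * ∑ j, (Y - G (L + 1)) i j * q l j := by
          rw [Finset.mul_sum]; congr 1; ext j; ring
      _ = 0 := by rw [hA i]; ring
  have h3 : ∑ i, ∑ j, v i ^ 2 * q l j ^ 2 = α l ^ 2 + β l ^ 2 := by
    calc ∑ i, ∑ j, v i ^ 2 * q l j ^ 2 = ∑ i, v i ^ 2 * ∑ j, q l j ^ 2 := by
          simp [Finset.mul_sum]
      _ = ∑ i, v i ^ 2 := by simp [hqnorm]
      _ = α l ^ 2 + β l ^ 2 := hvnorm
  rw [h2, h3]; ring
end

section
/- Let Y be a real n₁×n₂ matrix, P a real n₁×(ℓ+1) matrix with orthonormal columns, Q a real n₂×ℓ matrix with orthonormal columns, q ∈ ℝ^{n₂} with Qᵀq = 0, α ∈ ℝ, and B a real (ℓ+1)×ℓ matrix such that PᵀY = B·Qᵀ + α·e_{ℓ+1}·qᵀ, where e_{ℓ+1} is the last standard basis vector of ℝ^{ℓ+1}. Let B = U·Σ·Vᵀ be a singular value decomposition of B, with U ∈ ℝ^{(ℓ+1)×(ℓ+1)} and V ∈ ℝ^{ℓ×ℓ} orthogonal and Σ rectangular diagonal with diagonal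 entries σ̃₁ ≥ … ≥ σ̃_ℓ ≥ 0. For r ≤ ℓ let B₁ be the r-truncated SVD of B (obtained from U·Σ·Vᵀ by replacing σ̃_{r+1}, …, σ̃_ℓ with 0), and set W = P·B₁·Qᵀ and G = P·B·Qᵀ. Then ‖Y − W‖_F² = ‖Y − G‖_F² + ∑_{i=r+1}^{ℓ} σ̃_i². -/
open Matrix

lemma frobSq_eq_trace {n₁ n₂ : ℕ} (A : Matrix (Fin n₁) (Fin n₂) ℝ) :
    frobSq A = Matrix.trace (Aᵀ * A) := by
  simp only [frobSq, Matrix.trace, Matrix.diag, Matrix.mul_apply, Matrix.transpose_apply, sq]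
  rw [Finset.sum_comm]

lemma frobSq_add {n₁ n₂ : ℕ} (A C : Matrix (Fin n₁) (Fin n₂) ℝ) :
    frobSq (A + C) = frobSq A + 2 * Matrix.trace (Aᵀ * C) + frobSq C := by
  rw [frobSq_eq_trace, frobSq_eq_trace, frobSq_eq_trace]
  rw [Matrix.transpose_add, Matrix.add_mul, Matrix.mul_add, Matrix.mul_add]
  simp only [Matrix.trace_add]
  have : Matrix.trace (Cᵀ * A) = Matrix.trace (Aᵀ * C) := by
    rw [← Matrix.trace_transpose (Cᵀ * A), Matrix.transpose_mul, Matrix.transpose_transpose]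
  rw [this]; ring

lemma frobSq_mul_left {n₁ n₂ m : ℕ} (M : Matrix (Fin n₁) (Fin m) ℝ) (hM : Mᵀ * M = 1)
    (A : Matrix (Fin m) (Fin n₂) ℝ) :
    frobSq (M * A) = frobSq A := by
  rw [frobSq_eq_trace, frobSq_eq_trace, Matrix.transpose_mul]
  rw [show Aᵀ * Mᵀ * (M * A) = Aᵀ * (Mᵀ * M) * A by simp only [Matrix.mul_assoc]]
  rw [hM, Matrix.mul_one]

lemma frobSq_mul_right {n₁ n₂ m : ℕ} (N : Matrix (Fin n₂) (Fin m) ℝ) (hN : Nᵀ * N = 1)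
    (A : Matrix (Fin n₁) (Fin m) ℝ) :
    frobSq (A * Nᵀ) = frobSq A := by
  rw [frobSq_eq_trace, frobSq_eq_trace, Matrix.transpose_mul, Matrix.transpose_transpose]
  rw [show N * Aᵀ * (A * Nᵀ) = N * (Aᵀ * A) * Nᵀ by simp only [Matrix.mul_assoc]]
  rw [Matrix.trace_mul_cycle]
  rw [hN, Matrix.one_mul]

/-- The singular values `σ̃₁ ≥ … ≥ σ̃_ℓ` of `B` are encoded as
`σ : Fin ℓ → ℝ` (0-indexed), `Σ` is the rectangular diagonal matrix of the `σ i`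
and `Sig1` its `r`-truncation. -/
theorem stmt_17 {n₁ n₂ ℓ : ℕ} (r : ℕ) (hr : r ≤ ℓ)
    (Y : Matrix (Fin n₁) (Fin n₂) ℝ)
    (P : Matrix (Fin n₁) (Fin (ℓ + 1)) ℝ) (hP : Pᵀ * P = 1)
    (Q : Matrix (Fin n₂) (Fin ℓ) ℝ) (hQ : Qᵀ * Q = 1)
    (q : Fin n₂ → ℝ) (hq : Qᵀ.mulVec q = 0)
    (α : ℝ) (B : Matrix (Fin (ℓ + 1)) (Fin ℓ) ℝ)
    (hLanczos : Pᵀ * Y = B * Qᵀ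
      + α • Matrix.vecMulVec (Pi.single (Fin.last ℓ) 1) q)
    (U : Matrix (Fin (ℓ + 1)) (Fin (ℓ + 1)) ℝ) (hU : Uᵀ * U = 1)
    (V : Matrix (Fin ℓ) (Fin ℓ) ℝ) (hV : Vᵀ * V = 1)
    (σ : Fin ℓ → ℝ) (hσnonneg : ∀ i, 0 ≤ σ i)
    (hσmono : ∀ i j : Fin ℓ, i ≤ j → σ j ≤ σ i)
    (Sig : Matrix (Fin (ℓ + 1)) (Fin ℓ) ℝ)
    (hSig : ∀ i j, Sig i j = if (i : ℕ) = (j : ℕ) then σ j else 0)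
    (hSVD : B = U * Sig * Vᵀ)
    (B₁ : Matrix (Fin (ℓ + 1)) (Fin ℓ) ℝ)
    (Sig1 : Matrix (Fin (ℓ + 1)) (Fin ℓ) ℝ)
    (hSig1 : ∀ i j, Sig1 i j = if (i : ℕ) = (j : ℕ) ∧ (j : ℕ) < r then σ j else 0)
    (hB₁ : B₁ = U * Sig1 * Vᵀ)
    (W G : Matrix (Fin n₁) (Fin n₂) ℝ)
    (hW : W = P * B₁ * Qᵀ) (hG : G = P * B * Qᵀ) :
    frobSq (Y - W) = frobSq (Y - G)
      + ∑ i ∈ Finset.univ.filter (fun i : Fin ℓ => r ≤ (i : ℕ)), σ i ^ 2 := by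
  -- the tail part
  set D : Matrix (Fin n₁) (Fin n₂) ℝ := G - W with hD
  have hDeq : D = P * (B - B₁) * Qᵀ := by
    rw [hD, hG, hW, Matrix.mul_sub, Matrix.sub_mul]
  -- P^T Y Q = B
  have hPYQ : Pᵀ * Y * Q = B := by
    rw [hLanczos, Matrix.add_mul, Matrix.mul_assoc, hQ, Matrix.mul_one]
    have : Matrix.vecMulVec (Pi.single (Fin.last ℓ) (1:ℝ)) q * Q = 0 := by
      ext i j
      have h0 : ∑ k, q k * Q k j = 0 := by
        have := congrFun hq j
        simpa [Matrix.mulVec, Matrix.transpose_apply, dotProduct, mul_comm] using this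
      simp [Matrix.mul_apply, Matrix.vecMulVec_apply, mul_assoc, ← Finset.mul_sum, h0]
    rw [Matrix.smul_mul, this, smul_zero, add_zero]
  -- cross term vanishes
  have hPG : Pᵀ * (Y - G) * Q = 0 := by
    rw [Matrix.mul_sub, Matrix.sub_mul, hPYQ, hG]
    rw [show Pᵀ * (P * B * Qᵀ) * Q = (Pᵀ * P) * B * (Qᵀ * Q) by simp only [Matrix.mul_assoc]]
    rw [hP, hQ, Matrix.one_mul, Matrix.mul_one, sub_self]
  have hcross : Matrix.trace ((Y - G)ᵀ * D) = 0 := by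
    rw [hDeq, show (Y - G)ᵀ * (P * (B - B₁) * Qᵀ) = ((Y - G)ᵀ * P * (B - B₁)) * Qᵀ by
      simp only [Matrix.mul_assoc]]
    rw [Matrix.trace_mul_comm, ← Matrix.mul_assoc, ← Matrix.mul_assoc]
    have : Qᵀ * (Y - G)ᵀ * P = (Pᵀ * (Y - G) * Q)ᵀ := by
      simp [Matrix.transpose_mul, Matrix.mul_assoc]
    rw [this, hPG]
    simp
  -- norm of the tail
  have hSigdiff : frobSq (B - B₁) =
      ∑ i ∈ Finset.univ.filter (fun i : Fin ℓ => r ≤ (i : ℕ)), σ i ^ 2 := by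
    rw [show B - B₁ = U * (Sig - Sig1) * Vᵀ by
      rw [hSVD, hB₁, Matrix.mul_sub, Matrix.sub_mul]]
    rw [frobSq_mul_right V hV, frobSq_mul_left U hU]
    unfold frobSq
    rw [Finset.sum_comm, Finset.sum_filter]
    refine Finset.sum_congr rfl fun j _ => ?_
    rw [Finset.sum_eq_single (Fin.castSucc j)]
    · simp only [Matrix.sub_apply, hSig, hSig1, Fin.coe_castSucc]
      by_cases h : r ≤ (j : ℕ)
      · simp [h, Nat.not_lt.mpr h]
      · simp [h, Nat.lt_of_not_le h]
    · intro i _ hi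
      have : (i : ℕ) ≠ (j : ℕ) := by
        intro hcoe
        exact hi (Fin.ext (by simpa using hcoe))
      simp [Matrix.sub_apply, hSig, hSig1, this]
    · intro h; exact absurd (Finset.mem_univ _) h
  -- put it together
  have hsplit : Y - W = (Y - G) + D := by rw [hD]; abel
  rw [hsplit, frobSq_add, hcross]
  have : frobSq D = frobSq (B - B₁) := by
    rw [hDeq, frobSq_mul_right Q hQ, frobSq_mul_left P hP]
  rw [this, hSigdiff]; ring
end

section
/- Let Y be a real n₁×n₂ matrix with singular value decomposition Y = ∑_{i=1}^{m} σ_i·u_i·v_iᵀ, where m = min(n₁, n₂), σ₁ ≥ σ₂ ≥ … ≥ σ_m ≥ 0, u₁, …, u_m ∈ ℝ^{n₁} are orthonormal, and v₁, …, v_m ∈ ℝ^{n₂} are orthonormal. Let r < m with σ_{r+1} > 0, and set Y₁ = ∑_{i=1}^{r} σ_i·u_i·v_iᵀ and Y₂ = ∑_{i=r+1}^{m} σ_i·u_i·v_iᵀ. Then for every b ∈ [0, σ_r/σ_{r+1}) and every real n₁×n₂ matrix Z with rank(Z) ≤ r, one has ‖Y₁ − (Y₁ + b·Y₂)‖_F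 ≤ ‖Z − (Y₁ + b·Y₂)‖_F; that is, Y₁ is a projection of Y₁ + b·Y₂ onto the rank level set {Z : rank(Z) ≤ r} in the Frobenius norm. -/
/-!
Write `M = Y₁ + b • Y₂ = ∑ dᵢ • uᵢ vᵢᵀ`, with `dᵢ = σᵢ` for `i ≤ r` and `dᵢ = b σᵢ` for `i > r`.
The bound on `b` puts the threshold `τ = (b σ_{r+1})²` between the `dᵢ²` with `i ≤ r` and the
others. For `Z` of rank at most `r`, let `Q` be the orthogonal projection onto the orthogonal
complement of the column space of `Z`. Applying `Q` columnwise, `‖Z - M‖² ≥ ‖Q M‖² = ∑ dᵢ² qᵢ`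
with `qᵢ = ‖Q uᵢ‖² ∈ [0, 1]`, and Bessel's inequality in the column space gives `∑ qᵢ ≥ m - r`.
Weights of this kind, against coefficients separated by a threshold, give total mass at least
`∑_{i > r} dᵢ² = ‖Y₁ - M‖²`.
-/

noncomputable def frobNorm {n₁ n₂ : ℕ} (A : Matrix (Fin n₁) (Fin n₂) ℝ) : ℝ :=
  Real.sqrt (∑ i, ∑ j, A i j ^ 2)

open Finset

theorem sum_le_sum_mul_of_threshold {ι : Type*} [Fintype ι] [DecidableEq ι] (s : Finset ι)
    (x q : ι → ℝ) {τ : ℝ} (hτ : 0 ≤ τ) (hq₀ : ∀ i, 0 ≤ q i) (hq₁ : ∀ i, q i ≤ 1)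
    (hs : ∀ i ∈ s, x i ≤ τ) (hsc : ∀ i ∉ s, τ ≤ x i) (hcard : (#s : ℝ) ≤ ∑ i, q i) :
    ∑ i ∈ s, x i ≤ ∑ i, x i * q i := by
  have h_in : ∑ i ∈ s, x i * (1 - q i) ≤ ∑ i ∈ s, τ * (1 - q i) :=
    sum_le_sum fun i hi => mul_le_mul_of_nonneg_right (hs i hi) (sub_nonneg.2 (hq₁ i))
  have h_out : ∑ i ∈ sᶜ, τ * q i ≤ ∑ i ∈ sᶜ, x i * q i :=
    sum_le_sum fun i hi => mul_le_mul_of_nonneg_right (hsc i (mem_compl.1 hi)) (hq₀ i)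
  have h_card : τ * (#s - ∑ i ∈ s, q i) ≤ τ * ∑ i ∈ sᶜ, q i := by
    rw [← sum_add_sum_compl s q] at hcard
    exact mul_le_mul_of_nonneg_left (by linarith) hτ
  simp only [mul_sub, mul_one, sum_sub_distrib, ← mul_sum, sum_const, nsmul_eq_mul] at h_in
  rw [← mul_sum] at h_out
  rw [← sum_add_sum_compl s (fun i => x i * q i)]
  linarith

open scoped RealInnerProductSpace

theorem Orthonormal.sum_norm_sq_starProjection_le_finrank {ι E : Type*} [Fintype ι]
    [NormedAddCommGroup E] [InnerProductSpace ℝ E] {e : ι → E} (he : Orthonormal ℝ e)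
    (K : Submodule ℝ E) [FiniteDimensional ℝ K] :
    ∑ i, ‖K.starProjection (e i)‖ ^ 2 ≤ Module.finrank ℝ K := by
  let w := stdOrthonormalBasis ℝ K
  have h_parseval (x : E) : ‖K.starProjection x‖ ^ 2 = ∑ a, ⟪(w a : E), x⟫ ^ 2 := by
    rw [K.starProjection_apply, ← Submodule.coe_norm, ← w.sum_sq_inner_right]
    simp only [Submodule.inner_orthogonalProjectionOnto_eq_of_mem_left]
  have h_bessel (a) : ∑ i, ⟪(w a : E), e i⟫ ^ 2 ≤ 1 := by
    have h_unit : ‖(w a : E)‖ = 1 := w.orthonormal.1 a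
    simpa [real_inner_comm, sq_abs, h_unit] using he.sum_inner_products_le (w a : E) (s := univ)
  calc ∑ i, ‖K.starProjection (e i)‖ ^ 2 = ∑ a, ∑ i, ⟪(w a : E), e i⟫ ^ 2 := by
        simp only [h_parseval]; exact sum_comm
    _ ≤ ∑ _a, (1 : ℝ) := sum_le_sum fun a _ => h_bessel a
    _ = Module.finrank ℝ K := by simp

theorem Orthonormal.card_sub_finrank_le_sum_norm_sq_starProjection_orthogonal {ι E : Type*}
    [Fintype ι] [NormedAddCommGroup E] [InnerProductSpace ℝ E] {e : ι → E}
    (he : Orthonormal ℝ e) (K : Submodule ℝ E) [FiniteDimensional ℝ K] :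
    (Fintype.card ι : ℝ) - Module.finrank ℝ K ≤ ∑ i, ‖Kᗮ.starProjection (e i)‖ ^ 2 := by
  have h_pyth (i : ι) : ‖Kᗮ.starProjection (e i)‖ ^ 2 = 1 - ‖K.starProjection (e i)‖ ^ 2 := by
    rw [eq_sub_iff_add_eq', ← K.norm_sq_eq_add_norm_sq_starProjection, he.1 i, one_pow]
  simp only [h_pyth, sum_sub_distrib, sum_const, card_univ, nsmul_eq_mul, mul_one]
  linarith [he.sum_norm_sq_starProjection_le_finrank K]

theorem orthonormal_toLp_of_sum_mul_eq_ite {ι κ : Type*} [Fintype κ] [DecidableEq ι]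
    {u : ι → κ → ℝ} (hu : ∀ i j, ∑ t, u i t * u j t = if i = j then 1 else 0) :
    Orthonormal ℝ (fun i => WithLp.toLp 2 (u i) : ι → EuclideanSpace ℝ κ) := by
  rw [orthonormal_iff_ite]
  intro i j
  simp [PiLp.inner_apply, ← hu, mul_comm]

theorem sum_norm_sq_sum_smul_of_sum_mul_eq_ite {ι κ E : Type*} [Fintype κ] [DecidableEq ι]
    [NormedAddCommGroup E] [InnerProductSpace ℝ E] {v : ι → κ → ℝ}
    (hv : ∀ i k, ∑ t, v i t * v k t = if i = k then 1 else 0) (s : Finset ι) (x : ι → E) :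
    ∑ t, ‖∑ i ∈ s, v i t • x i‖ ^ 2 = ∑ i ∈ s, ‖x i‖ ^ 2 := by
  calc ∑ t, ‖∑ i ∈ s, v i t • x i‖ ^ 2
      = ∑ t, ∑ i ∈ s, ∑ k ∈ s, v i t * (v k t * ⟪x k, x i⟫) := by
        simp only [← real_inner_self_eq_norm_sq, sum_inner, inner_sum, real_inner_smul_left,
          real_inner_smul_right]
    _ = ∑ i ∈ s, ∑ k ∈ s, (∑ t, v i t * v k t) * ⟪x k, x i⟫ := by
        rw [sum_comm]
        refine sum_congr rfl fun i _ => ?_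
        rw [sum_comm]
        simp only [sum_mul, mul_assoc]
    _ = ∑ i ∈ s, ‖x i‖ ^ 2 := by
        refine sum_congr rfl fun i hi => ?_
        simp [hv, ite_mul, hi]

namespace Matrix

variable {m n : Type*}

def column (A : Matrix m n ℝ) (j : n) : EuclideanSpace ℝ m :=
  WithLp.toLp 2 (fun i => A i j)

theorem column_sub (A B : Matrix m n ℝ) (j : n) :
    (A - B).column j = A.column j - B.column j := rfl

theorem column_sum_smul_vecMulVec {ι : Type*} (s : Finset ι) (c : ι → ℝ)
    (x : ι → m → ℝ) (y : ι → n → ℝ) (j : n) :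
    (∑ i ∈ s, c i • vecMulVec (x i) (y i)).column j
      = ∑ i ∈ s, y i j • c i • WithLp.toLp 2 (x i) := by
  ext t
  simp [column, Matrix.sum_apply, vecMulVec_apply, mul_left_comm, mul_comm]

theorem column_mem_range_toEuclideanLin [Fintype n] [DecidableEq n] (A : Matrix m n ℝ) (j : n) :
    A.column j ∈ LinearMap.range (toEuclideanLin A) :=
  ⟨EuclideanSpace.single j 1, by ext; simp [column]⟩

theorem finrank_range_toEuclideanLin [Fintype m] [Fintype n] [DecidableEq n]
    (A : Matrix m n ℝ) :
    Module.finrank ℝ (LinearMap.range (toEuclideanLin A)) = A.rank := by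
  rw [toEuclideanLin_eq_toLin_orthonormal, ← rank_eq_finrank_range_toLin]

end Matrix

theorem frobNorm_nonneg {n₁ n₂ : ℕ} (A : Matrix (Fin n₁) (Fin n₂) ℝ) : 0 ≤ frobNorm A :=
  Real.sqrt_nonneg _

theorem frobNorm_sq {n₁ n₂ : ℕ} (A : Matrix (Fin n₁) (Fin n₂) ℝ) :
    frobNorm A ^ 2 = ∑ j, ‖A.column j‖ ^ 2 := by
  rw [frobNorm, Real.sq_sqrt (by positivity), sum_comm]
  simp [Matrix.column, EuclideanSpace.norm_sq_eq]

theorem sum_sq_le_frobNorm_sub_sq {n₁ n₂ : ℕ} {ι : Type*} [Fintype ι] [DecidableEq ι]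
    {u : ι → Fin n₁ → ℝ} {v : ι → Fin n₂ → ℝ}
    (hu : ∀ i j, ∑ t, u i t * u j t = if i = j then 1 else 0)
    (hv : ∀ i j, ∑ t, v i t * v j t = if i = j then 1 else 0)
    (d : ι → ℝ) (s : Finset ι) {τ : ℝ} (hτ : 0 ≤ τ) (hs : ∀ i ∈ s, d i ^ 2 ≤ τ)
    (hsc : ∀ i ∉ s, τ ≤ d i ^ 2) (Z : Matrix (Fin n₁) (Fin n₂) ℝ)
    (hZ : Z.rank + #s ≤ Fintype.card ι) :
    ∑ i ∈ s, d i ^ 2 ≤ frobNorm (Z - ∑ i, d i • Matrix.vecMulVec (u i) (v i)) ^ 2 := by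
  set M := ∑ i, d i • Matrix.vecMulVec (u i) (v i)
  set K := LinearMap.range (Matrix.toEuclideanLin Z)
  set U : ι → EuclideanSpace ℝ (Fin n₁) := fun i => WithLp.toLp 2 (u i)
  have hU : Orthonormal ℝ U := orthonormal_toLp_of_sum_mul_eq_ite hu
  have h_proj (j) : Kᗮ.starProjection ((Z - M).column j)
      = -∑ i, v i j • d i • Kᗮ.starProjection (U i) := by
    rw [Matrix.column_sub, map_sub,
      K.starProjection_orthogonal_apply_eq_zero (Z.column_mem_range_toEuclideanLin j),
      Matrix.column_sum_smul_vecMulVec]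
    simp [U]
  have h_card : (#s : ℝ) ≤ Fintype.card ι - Module.finrank ℝ K := by
    rw [Matrix.finrank_range_toEuclideanLin]
    have : ((Z.rank + #s : ℕ) : ℝ) ≤ Fintype.card ι := by exact_mod_cast hZ
    push_cast at this
    linarith
  calc ∑ i ∈ s, d i ^ 2 ≤ ∑ i, d i ^ 2 * ‖Kᗮ.starProjection (U i)‖ ^ 2 := by
        refine sum_le_sum_mul_of_threshold s _ _ hτ (fun i => by positivity) (fun i => ?_) hs hsc
          (h_card.trans (hU.card_sub_finrank_le_sum_norm_sq_starProjection_orthogonal K))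
        exact pow_le_one₀ (norm_nonneg _)
          ((Kᗮ.norm_starProjection_apply_le _).trans (hU.1 i).le)
    _ = ∑ j, ‖Kᗮ.starProjection ((Z - M).column j)‖ ^ 2 := by
        simp only [h_proj, norm_neg, sum_norm_sq_sum_smul_of_sum_mul_eq_ite hv, norm_smul,
          mul_pow, Real.norm_eq_abs, sq_abs]
    _ ≤ ∑ j, ‖(Z - M).column j‖ ^ 2 :=
        sum_le_sum fun j _ => pow_le_pow_left₀ (norm_nonneg _) (Kᗮ.norm_starProjection_apply_le _) 2
    _ = frobNorm (Z - M) ^ 2 := (frobNorm_sq _).symm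

theorem frobNorm_sq_sum_smul_vecMulVec {n₁ n₂ : ℕ} {ι : Type*} [DecidableEq ι]
    {u : ι → Fin n₁ → ℝ} {v : ι → Fin n₂ → ℝ}
    (hu : ∀ i j, ∑ t, u i t * u j t = if i = j then 1 else 0)
    (hv : ∀ i j, ∑ t, v i t * v j t = if i = j then 1 else 0) (s : Finset ι) (c : ι → ℝ) :
    frobNorm (∑ i ∈ s, c i • Matrix.vecMulVec (u i) (v i)) ^ 2 = ∑ i ∈ s, c i ^ 2 := by
  simp only [frobNorm_sq, Matrix.column_sum_smul_vecMulVec,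
    sum_norm_sq_sum_smul_of_sum_mul_eq_ite hv, norm_smul,
    (orthonormal_toLp_of_sum_mul_eq_ite hu).1, mul_one, Real.norm_eq_abs, sq_abs]

/-- Singular values are 0-indexed: `σ ⟨i, _⟩` is the `(i+1)`-th
singular value `σ_{i+1}`, so `σ_r = σ ⟨r - 1, _⟩` and `σ_{r+1} = σ ⟨r, _⟩`. -/
theorem stmt_19 {n₁ n₂ : ℕ} (m : ℕ)
    (σ : Fin m → ℝ) (hσnonneg : ∀ i, 0 ≤ σ i)
    (hσmono : ∀ i j : Fin m, i ≤ j → σ j ≤ σ i)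
    (u : Fin m → Fin n₁ → ℝ) (v : Fin m → Fin n₂ → ℝ)
    (hu : ∀ i j, (∑ t, u i t * u j t) = if i = j then 1 else 0)
    (hv : ∀ i j, (∑ t, v i t * v j t) = if i = j then 1 else 0)
    (r : ℕ) (hr : r < m)
    (hσpos : 0 < σ ⟨r, hr⟩)
    (Y₁ Y₂ : Matrix (Fin n₁) (Fin n₂) ℝ)
    (hY₁ : Y₁ = ∑ i ∈ Finset.univ.filter (fun i : Fin m => (i : ℕ) < r),
      σ i • Matrix.vecMulVec (u i) (v i))
    (hY₂ : Y₂ = ∑ i ∈ Finset.univ.filter (fun i : Fin m => r ≤ (i : ℕ)),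
      σ i • Matrix.vecMulVec (u i) (v i)) :
    ∀ b : ℝ, 0 ≤ b → b < σ ⟨r - 1, by omega⟩ / σ ⟨r, hr⟩ →
      ∀ Z : Matrix (Fin n₁) (Fin n₂) ℝ, Z.rank ≤ r →
        frobNorm (Y₁ - (Y₁ + b • Y₂)) ≤ frobNorm (Z - (Y₁ + b • Y₂)) := by
  intro b hb hb_lt Z hZ
  set s := univ.filter (fun i : Fin m => r ≤ (i : ℕ))
  set d : Fin m → ℝ := fun i => if r ≤ (i : ℕ) then b * σ i else σ i
  have hM : Y₁ + b • Y₂ = ∑ i, d i • Matrix.vecMulVec (u i) (v i) := by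
    simp only [hY₁, hY₂, d, ite_smul, sum_ite, smul_sum, smul_smul, not_le, add_comm]
    rfl
  have hres : Y₁ - (Y₁ + b • Y₂) = ∑ i ∈ s, (-d i) • Matrix.vecMulVec (u i) (v i) := by
    rw [sub_add_cancel_left, hY₂, smul_sum, ← sum_neg_distrib]
    refine sum_congr rfl fun i hi => ?_
    simp only [d, if_pos (mem_filter.1 hi).2, smul_smul, neg_smul]
  have hbσ : b * σ ⟨r, hr⟩ < σ ⟨r - 1, by omega⟩ := (lt_div_iff₀ hσpos).1 hb_lt
  have h_small : ∀ i ∈ s, d i ^ 2 ≤ (b * σ ⟨r, hr⟩) ^ 2 := by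
    intro i hi
    have hri : r ≤ (i : ℕ) := (mem_filter.1 hi).2
    simp only [d, if_pos hri]
    exact pow_le_pow_left₀ (mul_nonneg hb (hσnonneg i))
      (mul_le_mul_of_nonneg_left (hσmono _ _ (Fin.le_def.2 hri)) hb) 2
  have h_large : ∀ i ∉ s, (b * σ ⟨r, hr⟩) ^ 2 ≤ d i ^ 2 := by
    intro i hi
    have hir : ¬ r ≤ (i : ℕ) := fun h => hi (mem_filter.2 ⟨mem_univ i, h⟩)
    simp only [d, if_neg hir]
    exact pow_le_pow_left₀ (mul_nonneg hb (hσnonneg _))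
      (hbσ.le.trans (hσmono i ⟨r - 1, by omega⟩ (Fin.le_def.2 (show (i : ℕ) ≤ r - 1 by omega)))) 2
  have h_card : Z.rank + #s ≤ Fintype.card (Fin m) := by
    have : s = Ici ⟨r, hr⟩ := by ext i; simp [s, Fin.le_def]
    rw [this, Fin.card_Ici, Fin.val_mk, Fintype.card_fin]
    omega
  rw [hres, hM]
  refine (pow_le_pow_iff_left₀ (frobNorm_nonneg _) (frobNorm_nonneg _) two_ne_zero).1 ?_
  rw [frobNorm_sq_sum_smul_vecMulVec hu hv]
  simpa only [neg_sq] using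
    sum_sq_le_frobNorm_sub_sq hu hv d s (sq_nonneg _) h_small h_large Z h_card
end
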